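/- arXiv:2310.18835 — 3 statements merged into one kernel-verified Lean document; each statement's English description precedes it below -/
import Mathlib

section
/- For i ≠ j, the partial derivative of F_i with respect to q_j equals G_{ij}·(dp_j/dq_j)·[(p_i + η_i(1 − p_i))(w − x) − (1 − p_i + η_i p_i)(y − z)], and this quantity is nonnegative whenever G_{ij} ≥ 0, w > x, z > y, η_i ∈ [0,1], and p_i, p_j ∈ [0,1] with dp_j/dq_j ≥ 0. Hence the EWA attraction dynamics form a cooperative dynamical system. -/
/-!
The logistic response `p_j` is increasing with values in `[0, 1]`, and for `i ≠ j` the variable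
`q_j` enters `F_i` only through the two network sums, each of which is affine in `p_j`.
So `∂F_i/∂q_j` is `G_{ij} · p_j'` times
`(p_i + η_i(1 - p_i))(w - x) - (1 - p_i + η_i p_i)(y - z)`, a difference of a nonnegative
and a nonpositive term once the weights in front lie in `[0, 1]`.
-/

open Real

lemma logistic_eq_sigmoid (c t : ℝ) : 1 / (1 + exp (-c * t)) = sigmoid (c * t) := by
  rw [sigmoid_def, one_div, neg_mul]

lemma logistic_mem_Icc (c t : ℝ) : 1 / (1 + exp (-c * t)) ∈ Set.Icc (0 : ℝ) 1 := by
  rw [logistic_eq_sigmoid]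
  exact ⟨sigmoid_nonneg _, sigmoid_le_one _⟩

lemma hasDerivAt_logistic (c t : ℝ) :
    HasDerivAt (fun s => 1 / (1 + exp (-c * s)))
      (c * (1 / (1 + exp (-c * t))) * (1 - 1 / (1 + exp (-c * t)))) t := by
  simp only [logistic_eq_sigmoid]
  refine ((hasDerivAt_sigmoid (c * t)).comp t ((hasDerivAt_id t).const_mul c)).congr_deriv ?_
  ring

/-- The EWA attraction field `F_i(q)` for the response functions `p k`. -/
def ewaField {ι : Type*} [Fintype ι] (G : Matrix ι ι ℝ) (ψ η : ι → ℝ) (p : ι → ℝ → ℝ)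
    (w x y z : ℝ) (i : ι) (q : ι → ℝ) : ℝ :=
  -(ψ i) * q i
    + (p i (q i) + η i * (1 - p i (q i)))
      * (∑ k, G i k * (p k (q k) * w + (1 - p k (q k)) * x))
    - (1 - p i (q i) + η i * p i (q i))
      * (∑ k, G i k * (p k (q k) * y + (1 - p k (q k)) * z))

section Update

variable {ι : Type*} [Fintype ι] [DecidableEq ι]

lemma hasDerivAt_sum_update (f : ι → ℝ → ℝ) (q : ι → ℝ) (j : ι) {f' : ℝ}
    (hf : HasDerivAt (f j) f' (q j)) :
    HasDerivAt (fun t => ∑ k, f k (Function.update q j t k)) f' (q j) := by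
  have hsplit : (fun t => ∑ k, f k (Function.update q j t k))
      = fun t => f j t + ∑ k ∈ Finset.univ.erase j, f k (q k) := by
    funext t
    rw [← Finset.add_sum_erase _ _ (Finset.mem_univ j), Function.update_self]
    congr 1
    exact Finset.sum_congr rfl fun k hk => by
      rw [Function.update_of_ne (Finset.ne_of_mem_erase hk)]
  rw [hsplit]
  exact hf.add_const _

lemma hasDerivAt_ewaField_update (G : Matrix ι ι ℝ) (ψ η : ι → ℝ) (p : ι → ℝ → ℝ)
    (w x y z : ℝ) (q : ι → ℝ) {i j : ι} (hij : i ≠ j) {d : ℝ}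
    (hp : HasDerivAt (p j) d (q j)) :
    HasDerivAt (fun t => ewaField G ψ η p w x y z i (Function.update q j t))
      (G i j * d * ((p i (q i) + η i * (1 - p i (q i))) * (w - x)
        - (1 - p i (q i) + η i * p i (q i)) * (y - z))) (q j) := by
  have hsum (a b : ℝ) :=
    hasDerivAt_sum_update (fun k s => G i k * (p k s * a + (1 - p k s) * b)) q j
      (((hp.mul_const a).add ((hp.const_sub 1).mul_const b)).const_mul (G i j))
  have hF := ((hasDerivAt_const (q j) (-(ψ i) * q i)).add
    ((hsum w x).const_mul (p i (q i) + η i * (1 - p i (q i))))).sub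
    ((hsum y z).const_mul (1 - p i (q i) + η i * p i (q i)))
  simp only [ewaField, Function.update_of_ne hij]
  refine hF.congr_deriv ?_
  ring

end Update

lemma ewa_cross_term_nonneg {g d r η w x y z : ℝ} (hg : 0 ≤ g) (hd : 0 ≤ d)
    (hr : r ∈ Set.Icc (0 : ℝ) 1) (hη : 0 ≤ η) (hxw : x ≤ w) (hyz : y ≤ z) :
    0 ≤ g * d * ((r + η * (1 - r)) * (w - x) - (1 - r + η * r) * (y - z)) := by
  obtain ⟨hr0, hr1⟩ := hr
  have hA : 0 ≤ r + η * (1 - r) := add_nonneg hr0 (mul_nonneg hη (sub_nonneg.2 hr1))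
  have hB : 0 ≤ 1 - r + η * r := add_nonneg (sub_nonneg.2 hr1) (mul_nonneg hη hr0)
  have hgain := mul_nonneg hA (sub_nonneg.2 hxw)
  have hloss := mul_nonpos_of_nonneg_of_nonpos hB (sub_nonpos.2 hyz)
  exact mul_nonneg (mul_nonneg hg hd) (by linarith)

theorem stmt9_general {n : ℕ} (G : Matrix (Fin n) (Fin n) ℝ) (ψ η lam : Fin n → ℝ)
    (w x y z : ℝ) (q : Fin n → ℝ) (i j : Fin n) (hij : i ≠ j)
    (hG : ∀ a b, 0 ≤ G a b)
    (hwx : w > x) (hzy : z > y)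
    (hη : ∀ k, η k ∈ Set.Icc (0 : ℝ) 1) (hlam : ∀ k, 0 < lam k) :
    let p : Fin n → ℝ → ℝ := fun k t => 1 / (1 + Real.exp (-(lam k) * t))
    let Fi : (Fin n → ℝ) → ℝ := fun qv =>
      -(ψ i) * qv i
        + (p i (qv i) + η i * (1 - p i (qv i)))
          * (∑ k, G i k * (p k (qv k) * w + (1 - p k (qv k)) * x))
        - (1 - p i (qv i) + η i * p i (qv i))
          * (∑ k, G i k * (p k (qv k) * y + (1 - p k (qv k)) * z))
    let D : ℝ := G i j * (lam j * p j (q j) * (1 - p j (q j)))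
      * ((p i (q i) + η i * (1 - p i (q i))) * (w - x)
        - (1 - p i (q i) + η i * p i (q i)) * (y - z))
    HasDerivAt (fun t => Fi (Function.update q j t)) D (q j) ∧ 0 ≤ D := by
  intro p Fi D
  obtain ⟨hpj0, hpj1⟩ := logistic_mem_Icc (lam j) (q j)
  have hdpj : 0 ≤ lam j * p j (q j) * (1 - p j (q j)) :=
    mul_nonneg (mul_nonneg (hlam j).le hpj0) (sub_nonneg.2 hpj1)
  exact ⟨hasDerivAt_ewaField_update G ψ η p w x y z q hij (hasDerivAt_logistic (lam j) (q j)),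
    ewa_cross_term_nonneg (hG i j) hdpj (logistic_mem_Icc (lam i) (q i)) (hη i).1 hwx.le hzy.le⟩

/-- for i ≠ j, the partial derivative of F_i with respect to q_j equals
G_{ij}·(dp_j/dq_j)·[(p_i + η_i(1−p_i))(w−x) − (1−p_i+η_i p_i)(y−z)], where
dp_j/dq_j = λ_j p_j (1−p_j), and this quantity is nonnegative; hence the EWA dynamics
are cooperative. -/
theorem stmt9 {n : ℕ} (G : Matrix (Fin n) (Fin n) ℝ) (ψ η lam : Fin n → ℝ)
    (w x y z : ℝ) (q : Fin n → ℝ) (i j : Fin n) (hij : i ≠ j)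
    (hG : ∀ a b, 0 ≤ G a b) (hGsym : G.IsSymm)
    (hwx : w > x) (hzy : z > y)
    (hη : ∀ k, η k ∈ Set.Icc (0 : ℝ) 1) (hlam : ∀ k, 0 < lam k) :
    let p : Fin n → ℝ → ℝ := fun k t => 1 / (1 + Real.exp (-(lam k) * t))
    let Fi : (Fin n → ℝ) → ℝ := fun qv =>
      -(ψ i) * qv i
        + (p i (qv i) + η i * (1 - p i (qv i)))
          * (∑ k, G i k * (p k (qv k) * w + (1 - p k (qv k)) * x))
        - (1 - p i (qv i) + η i * p i (qv i))
          * (∑ k, G i k * (p k (qv k) * y + (1 - p k (qv k)) * z))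
    let D : ℝ := G i j * (lam j * p j (q j) * (1 - p j (q j)))
      * ((p i (q i) + η i * (1 - p i (q i))) * (w - x)
        - (1 - p i (q i) + η i * p i (q i)) * (y - z))
    HasDerivAt (fun t => Fi (Function.update q j t)) D (q j) ∧ 0 ≤ D :=
  stmt9_general G ψ η lam w x y z q i j hij hG hwx hzy hη hlam
end

section
/- For the symmetric-choice EWA dynamics, the Jacobian matrix of F at q = 0 has entries J_{ii} = −ψᵢ + (1 − ηᵢ)·dᵢ·(h + l)·λᵢ/4 and, for j ≠ i, J_{ij} = G_{ij}·(1 + ηᵢ)·(h − l)·λ_j/4. -/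
/-!
Write each choice probability as `p = 1/2 + u`. Both payoff sums are then
`dᵢ (h + l) / 2 ± (h - l) ∑ⱼ Gᵢⱼ uⱼ`, and in the difference of the two products everything except
terms linear in `u` cancels: `Fᵢ = -ψᵢ qᵢ + (1 + ηᵢ)(h - l) ∑ⱼ Gᵢⱼ uⱼ + (1 - ηᵢ)(h + l) dᵢ uᵢ`
exactly. Along a coordinate axis through `0` only one `u` moves, and `u_k(t) = σ(λ_k t) - 1/2`
has slope `λ_k / 4` at `0`; `Gᵢᵢ = 0` removes the network term from the diagonal entry.
-/

open Finset Real

lemma hasDerivAt_sigmoid_const_mul_zero (a : ℝ) :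
    HasDerivAt (fun t => sigmoid (a * t)) (a / 4) 0 := by
  have hlin : HasDerivAt (fun t : ℝ => a * t) a 0 := by
    simpa using (hasDerivAt_id (0 : ℝ)).const_mul a
  refine ((hasDerivAt_sigmoid (a * 0)).comp 0 hlin).congr_deriv ?_
  rw [mul_zero, sigmoid_zero]
  ring

lemma ewa_payoff_eq_linear {ι : Type*} [Fintype ι] (g P : ι → ℝ) (p η h l : ℝ) :
    (p + η * (1 - p)) * (∑ j, g j * (P j * h + (1 - P j) * l))
        - (1 - p + η * p) * (∑ j, g j * (P j * l + (1 - P j) * h))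
      = (1 + η) * (h - l) * (∑ j, g j * (P j - 1 / 2))
        + (1 - η) * (h + l) * (∑ j, g j) * (p - 1 / 2) := by
  have split (a b : ℝ) : ∑ j, g j * (P j * a + (1 - P j) * b)
      = (a + b) / 2 * (∑ j, g j) + (a - b) * (∑ j, g j * (P j - 1 / 2)) := by
    rw [mul_sum, mul_sum, ← sum_add_distrib]
    exact sum_congr rfl fun j _ => by ring
  rw [split h l, split l h]
  ring

lemma sum_mul_apply_update_zero {ι : Type*} [Fintype ι] [DecidableEq ι] (c : ι → ℝ)
    (u : ι → ℝ → ℝ) (hu : ∀ j, u j 0 = 0) (k : ι) (t : ℝ) :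
    ∑ j, c j * u j (Function.update (fun _ => (0 : ℝ)) k t j) = c k * u k t := by
  rw [sum_eq_single k (fun j _ hj => by rw [Function.update_of_ne hj, hu, mul_zero])
    (by simp), Function.update_self]

theorem stmt11_general {n : ℕ} (G : Matrix (Fin n) (Fin n) ℝ) (ψ η lam : Fin n → ℝ)
    (h l : ℝ) (hdiag : ∀ a, G a a = 0) :
    let p : Fin n → ℝ → ℝ := fun k t => 1 / (1 + Real.exp (-(lam k) * t))
    let F : Fin n → (Fin n → ℝ) → ℝ := fun i qv =>
      -(ψ i) * qv i
        + (p i (qv i) + η i * (1 - p i (qv i)))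
          * (∑ j, G i j * (p j (qv j) * h + (1 - p j (qv j)) * l))
        - (1 - p i (qv i) + η i * p i (qv i))
          * (∑ j, G i j * (p j (qv j) * l + (1 - p j (qv j)) * h))
    let d : Fin n → ℝ := fun i => ∑ j, G i j
    (∀ i : Fin n,
        HasDerivAt (fun t => F i (Function.update (fun _ => (0 : ℝ)) i t))
          (-(ψ i) + (1 - η i) * d i * (h + l) * lam i / 4) 0) ∧
      (∀ i j : Fin n, j ≠ i →
        HasDerivAt (fun t => F i (Function.update (fun _ => (0 : ℝ)) j t))
          (G i j * (1 + η i) * (h - l) * lam j / 4) 0) := by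
  intro p F d
  let u : Fin n → ℝ → ℝ := fun k t => sigmoid (lam k * t) - 1 / 2
  have hpu : ∀ k t, p k t = u k t + 1 / 2 := fun k t => by
    simp only [p, u, sigmoid_def, one_div, neg_mul]; ring
  have hu0 : ∀ k, u k 0 = 0 := fun k => by simp [u, sigmoid_zero]
  have hu_deriv : ∀ k, HasDerivAt (u k) (lam k / 4) 0 := fun k =>
    (hasDerivAt_sigmoid_const_mul_zero (lam k)).sub_const _
  have hF_axis : ∀ i k t, F i (Function.update (fun _ => (0 : ℝ)) k t)
      = -(ψ i) * Function.update (fun _ => (0 : ℝ)) k t i + (1 + η i) * (h - l) * (G i k * u k t)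
        + (1 - η i) * (h + l) * d i * u i (Function.update (fun _ => (0 : ℝ)) k t i) := by
    intro i k t
    simp only [F, d, add_sub_assoc]
    rw [ewa_payoff_eq_linear]
    simp only [hpu, add_sub_cancel_right]
    rw [sum_mul_apply_update_zero (G i) u hu0, add_assoc]
  refine ⟨fun i => ?_, fun i j hji => ?_⟩
  · simp only [hF_axis, Function.update_self, hdiag, zero_mul, mul_zero, add_zero]
    exact (((hasDerivAt_id 0).const_mul (-(ψ i))).add
      ((hu_deriv i).const_mul ((1 - η i) * (h + l) * d i))).congr_deriv (by ring)
  · simp only [hF_axis, Function.update_of_ne hji.symm, hu0, mul_zero, add_zero, zero_add]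
    exact (((hu_deriv j).const_mul (G i j)).const_mul ((1 + η i) * (h - l))).congr_deriv (by ring)

/-- the Jacobian of the symmetric-choice EWA dynamics at q = 0 has entries
J_{ii} = −ψᵢ + (1−ηᵢ)dᵢ(h+l)λᵢ/4 and J_{ij} = G_{ij}(1+ηᵢ)(h−l)λⱼ/4 for j ≠ i,
stated via partial derivatives at 0. -/
theorem stmt11 {n : ℕ} (G : Matrix (Fin n) (Fin n) ℝ) (ψ η lam : Fin n → ℝ)
    (h l : ℝ) (hhl : h > l)
    (hψ : ∀ i, 0 < ψ i) (hlam : ∀ i, 0 < lam i) (hη : ∀ i, η i ∈ Set.Icc (0 : ℝ) 1)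
    (hG01 : ∀ a b, G a b = 0 ∨ G a b = 1) (hGsym : G.IsSymm) (hdiag : ∀ a, G a a = 0) :
    let p : Fin n → ℝ → ℝ := fun k t => 1 / (1 + Real.exp (-(lam k) * t))
    let F : Fin n → (Fin n → ℝ) → ℝ := fun i qv =>
      -(ψ i) * qv i
        + (p i (qv i) + η i * (1 - p i (qv i)))
          * (∑ j, G i j * (p j (qv j) * h + (1 - p j (qv j)) * l))
        - (1 - p i (qv i) + η i * p i (qv i))
          * (∑ j, G i j * (p j (qv j) * l + (1 - p j (qv j)) * h))
    let d : Fin n → ℝ := fun i => ∑ j, G i j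
    (∀ i : Fin n,
        HasDerivAt (fun t => F i (Function.update (fun _ => (0 : ℝ)) i t))
          (-(ψ i) + (1 - η i) * d i * (h + l) * lam i / 4) 0) ∧
      (∀ i j : Fin n, j ≠ i →
        HasDerivAt (fun t => F i (Function.update (fun _ => (0 : ℝ)) j t))
          (G i j * (1 + η i) * (h - l) * lam j / 4) 0) :=
  stmt11_general G ψ η lam h l hdiag
end

section
/- Let J be an n×n real matrix with n distinct eigenvalues κ₁ > Re(κ₂) ≥ ... ≥ Re(κₙ), κ₁ real and simple, with right eigenvector v₁ having all entries strictly positive and left eigenvector u₁. For the linear ODE q̇ = J q with initial condition q(0), if u₁ᵀ q(0) > 0 then there exists T such that q(t) has all entries strictly positive for all t > T; if u₁ᵀ q(0) < 0 then there exists T such that q(t) has all entries strictly negative for all t > T. -/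
/-!
Since the `n` eigenvalues are distinct, ℂⁿ has a basis of eigenvectors of `J`, which we choose
to contain `v₁` for `κ₁`. A left eigenvector for `κ₁` is orthogonal to the eigenvectors of every
other eigenvalue, so the `v₁`-coordinate of `q(0)` is `u₁ᵀ q(0)`. In the eigenbasis
`e^{-κ₁ t} q(t) = Σ_μ c_μ e^{(μ - κ₁) t} w_μ`, and every mode with `μ ≠ κ₁` decays because
`Re μ < κ₁`; hence `e^{-κ₁ t} q(t) → (u₁ᵀ q(0)) v₁`, whose entries all have the sign of
`u₁ᵀ q(0)`.
-/

open Matrix Filter Topology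

-- `NormedSpace.exp` does not depend on the norm; this one only makes the Banach-algebra API apply.
attribute [local instance] Matrix.linftyOpNormedRing Matrix.linftyOpNormedAlgebra

theorem Module.End.exists_basis_hasEigenvector {K V : Type*} [Field K] [AddCommGroup V]
    [Module K V] [FiniteDimensional K V] (f : Module.End K V)
    (hcard : (spectrum K f).ncard = Module.finrank K V) (κ : spectrum K f) {v : V}
    (hv : f.HasEigenvector κ v) :
    ∃ b : Module.Basis (spectrum K f) K V,
      (∀ μ : spectrum K f, f.HasEigenvector μ (b μ)) ∧ b κ = v := by
  classical
  have : Fintype (spectrum K f) := f.finite_spectrum.fintype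
  have : Nonempty (spectrum K f) := ⟨κ⟩
  let w : spectrum K f → V := Function.update
    (fun μ ↦ (hasEigenvalue_iff_mem_spectrum.mpr μ.2).exists_hasEigenvector.choose) κ v
  have hw (μ : spectrum K f) : f.HasEigenvector μ (w μ) := by
    by_cases h : μ = κ
    · subst h; simpa [w] using hv
    · simpa [w, h] using (hasEigenvalue_iff_mem_spectrum.mpr μ.2).exists_hasEigenvector.choose_spec
  have hcard' : Fintype.card (spectrum K f) = Module.finrank K V := by
    rw [← hcard, ← Nat.card_coe_set_eq, Nat.card_eq_fintype_card]
  refine ⟨basisOfLinearIndependentOfCardEqFinrank (f.eigenvectors_linearIndependent _ w hw) hcard',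
    fun μ ↦ ?_, ?_⟩ <;> simp [coe_basisOfLinearIndependentOfCardEqFinrank, hw, w]

section

variable {ι : Type*} [Fintype ι]

theorem Matrix.map_exp [DecidableEq ι] {𝕂 𝕃 : Type*} [RCLike 𝕂] [RCLike 𝕃] (f : 𝕂 →+* 𝕃)
    (hf : Continuous f) (A : Matrix ι ι 𝕂) :
    (NormedSpace.exp A).map f = NormedSpace.exp (A.map f) :=
  NormedSpace.map_exp f.mapMatrix (continuous_id.matrix_map hf) A

theorem Matrix.exp_mulVec_of_mulVec_eq_smul [DecidableEq ι] {𝕂 : Type*} [RCLike 𝕂]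
    {A : Matrix ι ι 𝕂} {κ : 𝕂} {v : ι → 𝕂} (hv : A *ᵥ v = κ • v) :
    NormedSpace.exp A *ᵥ v = NormedSpace.exp κ • v := by
  have hpow (k : ℕ) : A ^ k *ᵥ v = κ ^ k • v := by
    induction k with
    | zero => simp
    | succ k ih => rw [pow_succ, ← mulVec_mulVec, hv, mulVec_smul, ih, smul_smul, pow_succ']
  have hA := (NormedSpace.exp_series_hasSum_exp' (𝕂 := 𝕂) A).map
    (LinearMap.applyₗ v ∘ₗ toLin'.toLinearMap) (LinearMap.continuous_of_finiteDimensional _)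
  refine hA.unique ?_
  convert (NormedSpace.exp_series_hasSum_exp' (𝕂 := 𝕂) κ).smul_const v using 2 with k
  change ((k.factorial : 𝕂)⁻¹ • A ^ k) *ᵥ v = _
  rw [smul_mulVec, hpow, smul_smul, smul_eq_mul]

theorem Matrix.exp_mulVec_eq_sum_repr [DecidableEq ι] {𝕂 σ : Type*} [RCLike 𝕂] [Fintype σ]
    {A : Matrix ι ι 𝕂} (b : Module.Basis σ 𝕂 (ι → 𝕂)) (μ : σ → 𝕂)
    (hb : ∀ s, A *ᵥ b s = μ s • b s) (x : ι → 𝕂) :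
    NormedSpace.exp A *ᵥ x = ∑ s, (b.repr x s * NormedSpace.exp (μ s)) • b s := by
  conv_lhs => rw [← b.sum_repr x]
  simp only [mulVec_sum, mulVec_smul, exp_mulVec_of_mulVec_eq_smul (hb _), smul_smul]

theorem Matrix.dotProduct_eq_zero_of_eigenvalue_ne {R : Type*} [CommRing R] [IsDomain R]
    {A : Matrix ι ι R} {κ μ : R} {u w : ι → R} (hu : Aᵀ *ᵥ u = κ • u) (hw : A *ᵥ w = μ • w)
    (hne : κ ≠ μ) : u ⬝ᵥ w = 0 := by
  have h : κ * (u ⬝ᵥ w) = μ * (u ⬝ᵥ w) := by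
    rw [← smul_eq_mul, ← smul_dotProduct, ← hu, mulVec_transpose, ← dotProduct_mulVec, hw,
      dotProduct_smul, smul_eq_mul]
  exact (mul_eq_mul_right_iff.mp h).resolve_left hne

theorem Matrix.eigenbasis_repr_eq_dotProduct {K σ : Type*} [Field K] [Fintype σ]
    {A : Matrix ι ι K} (b : Module.Basis σ K (ι → K)) {μ : σ → K} (hμ : μ.Injective)
    (hb : ∀ s, A *ᵥ b s = μ s • b s) {s₀ : σ} {u : ι → K} (hu : Aᵀ *ᵥ u = μ s₀ • u)
    (hus : u ⬝ᵥ b s₀ = 1) (x : ι → K) : b.repr x s₀ = u ⬝ᵥ x := by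
  conv_rhs => rw [← b.sum_repr x]
  rw [dotProduct_sum, Finset.sum_eq_single s₀]
  · simp [dotProduct_smul, hus]
  · intro s _ hs
    rw [dotProduct_smul, dotProduct_eq_zero_of_eigenvalue_ne hu (hb s) (hμ.ne hs.symm), smul_zero]
  · simp

theorem Matrix.tendsto_exp_neg_mul_smul_exp_smul_mulVec [DecidableEq ι] {A : Matrix ι ι ℂ}
    (hcard : (spectrum ℂ A).ncard = Fintype.card ι) {κ : ℂ} {u v : ι → ℂ}
    (hv : A *ᵥ v = κ • v) (hu : Aᵀ *ᵥ u = κ • u) (huv : u ⬝ᵥ v = 1)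
    (hdom : ∀ μ ∈ spectrum ℂ A, μ ≠ κ → μ.re < κ.re) (x : ι → ℂ) :
    Tendsto (fun t : ℝ ↦ Complex.exp (-(t * κ)) • (NormedSpace.exp ((t : ℂ) • A) *ᵥ x)) atTop
      (𝓝 ((u ⬝ᵥ x) • v)) := by
  have hv' : Module.End.HasEigenvector (toLin' A) κ v :=
    ⟨Module.End.mem_eigenspace_iff.mpr (by simpa using hv), fun h ↦ by simp [h] at huv⟩
  set s₀ : spectrum ℂ (toLin' A) :=
    ⟨κ, (Module.End.hasEigenvalue_of_hasEigenvector hv').mem_spectrum⟩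
  have : Fintype (spectrum ℂ (toLin' A)) := (Module.End.finite_spectrum _).fintype
  obtain ⟨b, hb, hbs₀⟩ := Module.End.exists_basis_hasEigenvector (toLin' A)
    (by rw [spectrum_toLin', hcard, Module.finrank_fintype_fun_eq_card]) s₀ hv'
  have hb' (s : spectrum ℂ (toLin' A)) : A *ᵥ b s = (s : ℂ) • b s := by
    simpa using (hb s).apply_eq_smul
  have hrepr : b.repr x s₀ = u ⬝ᵥ x :=
    eigenbasis_repr_eq_dotProduct b Subtype.val_injective hb' hu (by rw [hbs₀, huv]) x
  have hexpand (t : ℝ) : Complex.exp (-(t * κ)) • (NormedSpace.exp ((t : ℂ) • A) *ᵥ x) =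
      ∑ s, (b.repr x s * Complex.exp (t * (s - κ))) • b s := by
    rw [exp_mulVec_eq_sum_repr b (fun s ↦ t * s) (fun s ↦ by rw [smul_mulVec, hb', smul_smul]),
      Finset.smul_sum]
    refine Finset.sum_congr rfl fun s _ ↦ ?_
    rw [smul_smul, ← Complex.exp_eq_exp_ℂ, show (t : ℂ) * (s - κ) = -(t * κ) + t * s by ring,
      Complex.exp_add]
    ring_nf
  have hterm (s : spectrum ℂ (toLin' A)) :
      Tendsto (fun t : ℝ ↦ (b.repr x s * Complex.exp (t * (s - κ))) • b s) atTop
        (𝓝 (if s = s₀ then (u ⬝ᵥ x) • v else 0)) := by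
    split_ifs with h
    · subst h
      simp [hrepr, hbs₀, s₀]
    · have hlt : (s : ℂ).re < κ.re :=
        hdom s (spectrum_toLin' A ▸ s.2) fun h' ↦ h (Subtype.ext h')
      have hdecay : Tendsto (fun t : ℝ ↦ Complex.exp (t * (s - κ))) atTop (𝓝 0) := by
        refine Complex.tendsto_exp_nhds_zero_iff.mpr ?_
        simpa [Complex.re_ofReal_mul] using tendsto_id.atTop_mul_const_of_neg (sub_neg.mpr hlt)
      simpa using (hdecay.const_mul (b.repr x s)).smul_const (b s)
  simp_rw [hexpand]
  convert tendsto_finsetSum Finset.univ fun s _ ↦ hterm s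
  simp

theorem Matrix.tendsto_exp_neg_mul_mul_exp_smul_mulVec_apply [DecidableEq ι] {J : Matrix ι ι ℝ}
    (hcard : (spectrum ℂ (J.map (algebraMap ℝ ℂ))).ncard = Fintype.card ι) {κ : ℝ}
    {u v : ι → ℝ} (hv : J *ᵥ v = κ • v) (hu : Jᵀ *ᵥ u = κ • u) (huv : u ⬝ᵥ v = 1)
    (hdom : ∀ μ ∈ spectrum ℂ (J.map (algebraMap ℝ ℂ)), μ ≠ κ → μ.re < κ) (x : ι → ℝ) (i : ι) :
    Tendsto (fun t : ℝ ↦ Real.exp (-(t * κ)) * (NormedSpace.exp (t • J) *ᵥ x) i) atTop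
      (𝓝 ((u ⬝ᵥ x) * v i)) := by
  set f := algebraMap ℝ ℂ
  have hmap (M : Matrix ι ι ℝ) (w : ι → ℝ) : M.map f *ᵥ (f ∘ w) = f ∘ (M *ᵥ w) :=
    funext fun i ↦ (f.map_mulVec M w i).symm
  have h := tendsto_exp_neg_mul_smul_exp_smul_mulVec hcard (κ := κ) (u := f ∘ u) (v := f ∘ v)
    (by rw [hmap, hv]; ext; simp [f]) (by rw [← transpose_map, hmap, hu]; ext; simp [f])
    (by rw [← f.map_dotProduct, huv, map_one]) hdom (f ∘ x)
  have hre := ((Complex.continuous_re.comp (continuous_apply i)).tendsto _).comp h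
  convert hre using 1
  · ext t
    have hsmul : (t : ℂ) • J.map f = (t • J).map f := by ext; simp [f]
    have hexp : Complex.exp (-(t * κ)) = f (Real.exp (-(t * κ))) := by simp [f]
    simp only [Function.comp_apply, hsmul, ← map_exp f Complex.continuous_ofReal, hmap, hexp,
      Pi.smul_apply, smul_eq_mul, ← map_mul]
    exact (Complex.ofReal_re _).symm
  · simp only [Function.comp_apply, ← f.map_dotProduct, Pi.smul_apply, smul_eq_mul, ← map_mul]
    exact congrArg 𝓝 (Complex.ofReal_re _).symm

theorem Matrix.eventually_pos_exp_smul_mulVec [DecidableEq ι] {J : Matrix ι ι ℝ}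
    (hcard : (spectrum ℂ (J.map (algebraMap ℝ ℂ))).ncard = Fintype.card ι) {κ : ℝ}
    {u v : ι → ℝ} (hv : J *ᵥ v = κ • v) (hu : Jᵀ *ᵥ u = κ • u) (huv : u ⬝ᵥ v = 1)
    (hdom : ∀ μ ∈ spectrum ℂ (J.map (algebraMap ℝ ℂ)), μ ≠ κ → μ.re < κ) (hpos : ∀ i, 0 < v i)
    {x : ι → ℝ} (hx : 0 < u ⬝ᵥ x) :
    ∀ᶠ t : ℝ in atTop, ∀ i, 0 < (NormedSpace.exp (t • J) *ᵥ x) i := by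
  refine eventually_all.mpr fun i ↦ ?_
  filter_upwards [(tendsto_exp_neg_mul_mul_exp_smul_mulVec_apply hcard hv hu huv hdom x i)
    |>.eventually_const_lt (mul_pos hx (hpos i))] with t ht
  exact pos_of_mul_pos_right ht (Real.exp_pos _).le

end

theorem stmt16_general {n : ℕ} (J : Matrix (Fin n) (Fin n) ℝ) (κ1 : ℝ) (u1 v1 : Fin n → ℝ)
    (hdistinct : (spectrum ℂ (J.map (algebraMap ℝ ℂ))).ncard = n)
    (hdom : ∀ μ ∈ spectrum ℂ (J.map (algebraMap ℝ ℂ)), μ ≠ (κ1 : ℂ) → μ.re < κ1)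
    (hright : J *ᵥ v1 = κ1 • v1) (hleft : Jᵀ *ᵥ u1 = κ1 • u1)
    (hpos : ∀ i, 0 < v1 i) (hnorm : u1 ⬝ᵥ v1 = 1) (q0 : Fin n → ℝ) :
    (0 < u1 ⬝ᵥ q0 →
      ∃ T : ℝ, ∀ t > T, ∀ i, 0 < (NormedSpace.exp (t • J) *ᵥ q0) i) ∧
    (u1 ⬝ᵥ q0 < 0 →
      ∃ T : ℝ, ∀ t > T, ∀ i, (NormedSpace.exp (t • J) *ᵥ q0) i < 0) := by
  have eventually_pos (x : Fin n → ℝ) (hx : 0 < u1 ⬝ᵥ x) :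
      ∃ T : ℝ, ∀ t > T, ∀ i, 0 < (NormedSpace.exp (t • J) *ᵥ x) i := by
    obtain ⟨T, hT⟩ := eventually_atTop.mp <| eventually_pos_exp_smul_mulVec
      (by rwa [Fintype.card_fin]) hright hleft hnorm hdom hpos hx
    exact ⟨T, fun t ht ↦ hT t ht.le⟩
  refine ⟨eventually_pos q0, fun hq ↦ ?_⟩
  obtain ⟨T, hT⟩ := eventually_pos (-q0) (by rwa [dotProduct_neg, neg_pos])
  exact ⟨T, fun t ht i ↦ by simpa [mulVec_neg] using hT t ht i⟩

/-- for q̇ = Jq where J has n distinct (complex) eigenvalues, a real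
simple dominant eigenvalue κ₁ with strictly positive right eigenvector v₁ and left
eigenvector u₁ (normalized u₁ᵀv₁ = 1): if u₁ᵀq(0) > 0 then q(t) = exp(tJ)q(0) is
eventually entrywise positive, and if u₁ᵀq(0) < 0 it is eventually entrywise negative. -/
theorem stmt16 {n : ℕ} (J : Matrix (Fin n) (Fin n) ℝ) (κ1 : ℝ) (u1 v1 : Fin n → ℝ)
    (hdistinct : (spectrum ℂ (J.map (algebraMap ℝ ℂ))).ncard = n)
    (hmem : (κ1 : ℂ) ∈ spectrum ℂ (J.map (algebraMap ℝ ℂ)))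
    (hdom : ∀ μ ∈ spectrum ℂ (J.map (algebraMap ℝ ℂ)), μ ≠ (κ1 : ℂ) → μ.re < κ1)
    (hright : J *ᵥ v1 = κ1 • v1) (hleft : Jᵀ *ᵥ u1 = κ1 • u1)
    (hpos : ∀ i, 0 < v1 i) (hnorm : u1 ⬝ᵥ v1 = 1) (q0 : Fin n → ℝ) :
    (0 < u1 ⬝ᵥ q0 →
      ∃ T : ℝ, ∀ t > T, ∀ i, 0 < (NormedSpace.exp (t • J) *ᵥ q0) i) ∧
    (u1 ⬝ᵥ q0 < 0 →
      ∃ T : ℝ, ∀ t > T, ∀ i, (NormedSpace.exp (t • J) *ᵥ q0) i < 0) :=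
  stmt16_general J κ1 u1 v1 hdistinct hdom hright hleft hpos hnorm q0
end
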